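/- Let n ≥ 1 and let κ₁ ≤ κ₂ ≤ ... ≤ κₙ be a non-descending finite sequence of measurable cardinals, and let U₁, ..., Uₙ be normal measures over κ₁, ..., κₙ respectively. Let B be any set, let Aᵢ ∈ Uᵢ for each i, and let F : ∏ᵢ₌₁ⁿ Aᵢ → B be any function on the set of increasing n-tuples from A₁, ..., Aₙ. Then there exist sets Hᵢ ⊆ Aᵢ with Hᵢ ∈ Uᵢ, and a set of indices I ⊆ {1, ..., n}, such that for all increasing tuples ᾱ, β̄ ∈ ∏ᵢ₌₁ⁿ Hᵢ one has F(ᾱ) = F(β̄) if and only if ᾱ ↾ I = β̄ ↾ I. (In other words, the induced function F_I on the set of restrictions to I of tuples in ∏ᵢ₌₁ⁿ Hᵢ, defined by F_I(ᾱ ↾ I) = F(ᾱ), is well defined and injective.) -/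

import Mathlib

open Set

/-- `U` is a normal measure over `κ`: a κ-complete nonprincipal ultrafilter on
the ordinals below `κ` which is closed under diagonal intersections. -/
structure IsNormalMeasure (κ : Ordinal) (U : Set (Set Ordinal)) : Prop where
  sets_subset : ∀ A ∈ U, A ⊆ Set.Iio κ
  univ_mem : Set.Iio κ ∈ U
  empty_not_mem : (∅ : Set Ordinal) ∉ U
  superset_mem : ∀ A ∈ U, ∀ B ⊆ Set.Iio κ, A ⊆ B → B ∈ U
  inter_mem : ∀ A ∈ U, ∀ B ∈ U, A ∩ B ∈ U
  nonprincipal : ∀ α : Ordinal, {α} ∉ U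
  ultra : ∀ A ⊆ Set.Iio κ, A ∈ U ∨ Set.Iio κ \ A ∈ U
  complete : ∀ θ < κ, ∀ s : Ordinal → Set Ordinal,
      (∀ i < θ, s i ∈ U) → {β | β < κ ∧ ∀ i < θ, β ∈ s i} ∈ U
  normal : ∀ s : Ordinal → Set Ordinal, (∀ α < κ, s α ∈ U) →
      {β | β < κ ∧ ∀ α < β, β ∈ s α} ∈ U

/-- The increasing product `∏ᵢ Aᵢ`: the set of strictly increasing `n`-tuples
`x` of ordinals with `x i ∈ A i` for every `i`. -/
def IncProd {n : ℕ} (A : Fin n → Set Ordinal) : Set (Fin n → Ordinal) :=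
  {x | StrictMono x ∧ ∀ i, x i ∈ A i}

/-!
Rowbottom's theorem for finitely many normal measures lets us shrink the `Aᵢ` so that, for every
way `(p, q, g)` of interleaving two increasing tuples, the truth of `F (z ∘ p) = F (z ∘ q)` is the
same for all realisations `z`. Call `i` important if raising the `i`-th coordinate alone can
change `F`; by homogeneity it then always does. If the last coordinate where `x` and `y` differ is
an important `i` and `F x = F y`, duplicate the entry of the merged tuple that carries `y i`: this
yields two realisations of the pattern that agree on the `x`-positions and differ only at the
`i`-th `y`-position, so `F` cannot distinguish them, contradicting importance. If that coordinate
is unimportant, it can be aligned without changing `F`, and induction finishes. Making each `Hᵢ`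
avoid the smaller `κⱼ` keeps the duplicated pattern realisable.
-/

namespace IsNormalMeasure

variable {κ : Ordinal} {U : Set (Set Ordinal)}

lemma nonempty_of_mem (h : IsNormalMeasure κ U) {S : Set Ordinal} (hS : S ∈ U) : S.Nonempty :=
  nonempty_iff_ne_empty.2 fun he => h.empty_not_mem (he ▸ hS)

lemma pos (h : IsNormalMeasure κ U) : 0 < κ := by
  obtain ⟨β, hβ⟩ := h.nonempty_of_mem h.univ_mem
  exact zero_le.trans_lt hβ

lemma diff_singleton_mem (h : IsNormalMeasure κ U) (α : Ordinal) : Iio κ \ {α} ∈ U := by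
  rcases h.ultra ({α} ∩ Iio κ) inter_subset_right with h1 | h1
  · obtain ⟨_, rfl, hα⟩ := h.nonempty_of_mem h1
    rw [inter_eq_left.2 (singleton_subset_iff.2 hα)] at h1
    exact absurd h1 (h.nonprincipal _)
  · rwa [sdiff_inter_self_eq_sdiff] at h1

lemma Ioo_mem (h : IsNormalMeasure κ U) {θ : Ordinal} (hθ : θ < κ) : Ioo θ κ ∈ U := by
  have h1 := h.complete θ hθ (fun i => Iio κ \ {i}) fun i _ => h.diff_singleton_mem i
  refine h.superset_mem _ (h.inter_mem _ h1 _ (h.diff_singleton_mem θ)) _ (fun β hβ => hβ.2) ?_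
  rintro β ⟨⟨hβκ, hβ⟩, -, hβθ⟩
  exact ⟨lt_of_le_of_ne (not_lt.1 fun hlt => (hβ β hlt).2 rfl) (Ne.symm hβθ), hβκ⟩

lemma exists_gt_mem (h : IsNormalMeasure κ U) {S : Set Ordinal} (hS : S ∈ U) {θ : Ordinal}
    (hθ : θ < κ) : ∃ β ∈ S, θ < β := by
  obtain ⟨β, hβS, hβ, -⟩ := h.nonempty_of_mem (h.inter_mem _ hS _ (h.Ioo_mem hθ))
  exact ⟨β, hβS, hβ⟩

lemma iInter_mem (h : IsNormalMeasure κ U) {ι : Type*} [Finite ι] {s : ι → Set Ordinal}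
    (hs : ∀ k, s k ∈ U) : Iio κ ∩ ⋂ k, s k ∈ U := by
  classical
  have key (t : Finset ι) : Iio κ ∩ ⋂ k ∈ t, s k ∈ U := by
    induction t using Finset.induction_on with
    | empty => simpa using h.univ_mem
    | insert a t _ ih =>
      rw [Finset.set_biInter_insert, inter_left_comm]
      exact h.inter_mem _ (hs a) _ ih
  cases nonempty_fintype ι
  simpa using key Finset.univ

end IsNormalMeasure

lemma incProd_mono {n : ℕ} {A B : Fin n → Set Ordinal} (h : A ≤ B) : IncProd A ⊆ IncProd B :=
  fun _ hx => ⟨hx.1, fun i => h i (hx.2 i)⟩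

lemma cons_mem_incProd_iff {m : ℕ} {D : Fin (m + 1) → Set Ordinal} {a : Ordinal}
    {t : Fin m → Ordinal} :
    Fin.cons a t ∈ IncProd D ↔ a ∈ D 0 ∧ (∀ j, a < t j) ∧ t ∈ IncProd (Fin.tail D) := by
  simp only [IncProd, mem_ofPred_eq, Fin.strictMono_cons, Fin.forall_fin_succ, Fin.cons_zero,
    Fin.cons_succ, Fin.tail]
  tauto

lemma comp_mem_incProd {m n : ℕ} {D : Fin n → Set Ordinal} {f : Fin m → Fin n}
    {s : Fin n → Fin m} {t : Fin m → Ordinal} (ht : t ∈ IncProd (D ∘ f)) (hs : StrictMono s)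
    (hfs : ∀ k, f (s k) = k) : t ∘ s ∈ IncProd D :=
  ⟨ht.1.comp hs, fun k => by simpa only [Function.comp_apply, hfs] using ht.2 (s k)⟩

def IsHomogeneous {m : ℕ} (P : (Fin m → Ordinal) → Prop) (D : Fin m → Set Ordinal) : Prop :=
  ∀ z ∈ IncProd D, ∀ w ∈ IncProd D, P z → P w

lemma IsHomogeneous.mono {m : ℕ} {P : (Fin m → Ordinal) → Prop} {D D' : Fin m → Set Ordinal}
    (h : IsHomogeneous P D) (hle : D' ≤ D) : IsHomogeneous P D' :=
  fun z hz w hw => h z (incProd_mono hle hz) w (incProd_mono hle hw)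

theorem exists_isHomogeneous : ∀ {m : ℕ} {κ : Fin m → Ordinal} {U : Fin m → Set (Set Ordinal)},
    (∀ j, IsNormalMeasure (κ j) (U j)) → ∀ P : (Fin m → Ordinal) → Prop,
    ∃ D : Fin m → Set Ordinal, (∀ j, D j ∈ U j) ∧ IsHomogeneous P D
  | 0, _, _, _, _ =>
    ⟨fun j => j.elim0, fun j => j.elim0, fun z _ w _ hz => by rwa [Subsingleton.elim w z]⟩
  | m + 1, κ, U, hU, P => by
    choose D hD hDP using fun α =>
      exists_isHomogeneous (fun j => hU j.succ) fun t => P (Fin.cons α t)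
    set Δ : Fin m → Set Ordinal := fun j => {β | β < κ j.succ ∧ ∀ α < β, β ∈ D α j}
    have hΔ : ∀ j, Δ j ∈ U j.succ := fun j => (hU j.succ).normal _ fun α _ => hD α j
    have hslice {D₀ : Set Ordinal} {a : Ordinal} {t : Fin m → Ordinal}
        (h : Fin.cons a t ∈ IncProd (Fin.cons D₀ Δ)) : a ∈ D₀ ∧ t ∈ IncProd (D a) := by
      obtain ⟨ha, hat, ht⟩ := cons_mem_incProd_iff.1 h
      exact ⟨ha, ht.1, fun j => (ht.2 j).2 a (hat j)⟩
    set T := {α | ∃ t ∈ IncProd (D α), P (Fin.cons α t)}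
    rcases (hU 0).ultra (T ∩ Iio (κ 0)) inter_subset_right with hT | hT
    · refine ⟨Fin.cons (T ∩ Iio (κ 0)) Δ, Fin.cases hT hΔ, fun _ _ w hw _ => ?_⟩
      induction w using Fin.consCases with | cons b s => ?_
      obtain ⟨⟨⟨s', hs', hPs'⟩, -⟩, hs⟩ := hslice hw
      exact hDP b s' hs' s hs hPs'
    · refine ⟨Fin.cons (Iio (κ 0) \ (T ∩ Iio (κ 0))) Δ, Fin.cases hT hΔ, fun z hz _ _ hPz => ?_⟩
      induction z using Fin.consCases with | cons a t => ?_
      obtain ⟨⟨haκ, haT⟩, ht⟩ := hslice hz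
      exact absurd ⟨⟨t, ht, hPz⟩, haκ⟩ haT

theorem exists_mem_incProd_forall_gt : ∀ {m : ℕ} {κ : Fin m → Ordinal}
    {U : Fin m → Set (Set Ordinal)}, (∀ j, IsNormalMeasure (κ j) (U j)) → Monotone κ →
    ∀ {D : Fin m → Set Ordinal}, (∀ j, D j ∈ U j) → ∀ {θ : Ordinal}, (∀ j, θ < κ j) →
    ∃ t ∈ IncProd D, ∀ j, θ < t j
  | 0, _, _, _, _, _, _, _, _ => ⟨Fin.elim0, ⟨fun a => a.elim0, fun a => a.elim0⟩, fun a => a.elim0⟩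
  | m + 1, κ, U, hU, hκ, D, hD, θ, hθ => by
    obtain ⟨β, hβD, hθβ⟩ := (hU 0).exists_gt_mem (hD 0) (hθ 0)
    have hβκ (j : Fin m) : β < κ j.succ :=
      ((hU 0).sets_subset _ (hD 0) hβD).trans_le (hκ (Fin.zero_le _))
    obtain ⟨t, ht, hβt⟩ := exists_mem_incProd_forall_gt (fun j => hU j.succ)
      (hκ.comp Fin.strictMono_succ.monotone) (fun j => hD j.succ) hβκ
    exact ⟨Fin.cons β t, cons_mem_incProd_iff.2 ⟨hβD, hβt, ht⟩,
      Fin.cases hθβ fun j => hθβ.trans (hβt j)⟩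

theorem incProd_nonempty {m : ℕ} {κ : Fin m → Ordinal} {U : Fin m → Set (Set Ordinal)}
    (hU : ∀ j, IsNormalMeasure (κ j) (U j)) (hκ : Monotone κ) {D : Fin m → Set Ordinal}
    (hD : ∀ j, D j ∈ U j) : (IncProd D).Nonempty :=
  let ⟨t, ht, _⟩ := exists_mem_incProd_forall_gt hU hκ hD fun j => (hU j).pos
  ⟨t, ht⟩

section Families

variable {ι : Type*} {κ : ι → Ordinal} {U : ι → Set (Set Ordinal)}

theorem exists_forall_of_antitone {ι' : Type*} [Finite ι']
    (hU : ∀ i, IsNormalMeasure (κ i) (U i)) {P : ι' → (ι → Set Ordinal) → Prop}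
    (hP : ∀ k, Antitone (P k)) (h : ∀ k, ∃ H, (∀ i, H i ∈ U i) ∧ P k H) :
    ∃ H, (∀ i, H i ∈ U i) ∧ ∀ k, P k H := by
  choose H hH hPH using h
  exact ⟨fun i => Iio (κ i) ∩ ⋂ k, H k i, fun i => (hU i).iInter_mem fun k => hH k i,
    fun k => hP k (fun i => inter_subset_right.trans (iInter_subset _ k)) (hPH k)⟩

theorem exists_isHomogeneous_comp (hU : ∀ i, IsNormalMeasure (κ i) (U i)) {m : ℕ}
    (g : Fin m → ι) (P : (Fin m → Ordinal) → Prop) :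
    ∃ H : ι → Set Ordinal, (∀ i, H i ∈ U i) ∧ IsHomogeneous P (H ∘ g) := by
  obtain ⟨D, hD, hDP⟩ := exists_isHomogeneous (fun j => hU (g j)) P
  exact ⟨fun i => Iio (κ i) ∩ ⋂ j : {j // g j = i}, D j,
    fun i => (hU i).iInter_mem fun ⟨j, hj⟩ => hj ▸ hD j,
    hDP.mono fun j => inter_subset_right.trans (iInter_subset_of_subset ⟨j, rfl⟩ subset_rfl)⟩

theorem exists_forall_subset_Ici [Finite ι] (hU : ∀ i, IsNormalMeasure (κ i) (U i)) :
    ∃ H : ι → Set Ordinal, (∀ i, H i ∈ U i) ∧ ∀ i j, κ j < κ i → H i ⊆ Ici (κ j) :=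
  ⟨fun i => Iio (κ i) ∩ ⋂ j : {j // κ j < κ i}, Ioo (κ j) (κ i),
    fun i => (hU i).iInter_mem fun j => (hU i).Ioo_mem j.2,
    fun _ j hij _ hβ => (mem_iInter.1 hβ.2 ⟨j, hij⟩).1.le⟩

theorem monotone_comp_of_mem_incProd {H : ι → Set Ordinal} (hH : ∀ i, H i ⊆ Iio (κ i))
    (hav : ∀ i j, κ j < κ i → H i ⊆ Ici (κ j)) {m : ℕ} {g : Fin m → ι}
    {z : Fin m → Ordinal} (hz : z ∈ IncProd (H ∘ g)) : Monotone (κ ∘ g) := by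
  intro c d hcd
  by_contra hlt
  have hzc : κ (g d) ≤ z c := hav (g c) (g d) (not_le.1 hlt) (hz.2 c)
  exact (hzc.trans (hz.1.monotone hcd)).not_gt (hH _ (hz.2 d))

end Families

lemma Fin.succAbove_succ_eq_succAbove_castSucc {n : ℕ} {p i : Fin n} (h : i ≠ p) :
    p.succ.succAbove i = p.castSucc.succAbove i := by
  rcases h.lt_or_gt with h | h
  · rw [Fin.succAbove_succ_of_le _ _ h.le, Fin.succAbove_castSucc_of_lt _ _ h]
  · rw [Fin.succAbove_succ_of_lt _ _ h, Fin.succAbove_castSucc_of_le _ _ h.le]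

lemma Fin.predAbove_succ_succAbove {n : ℕ} (p i : Fin n) :
    p.predAbove (p.succ.succAbove i) = i := by
  rcases eq_or_ne i p with rfl | h
  · rw [Fin.succAbove_succ_self, Fin.predAbove_castSucc_self]
  · rw [Fin.succAbove_succ_eq_succAbove_castSucc h, Fin.predAbove_succAbove]

section Tuples

variable {n : ℕ} {D : Fin n → Set Ordinal} {u v : Fin n → Ordinal} {i : Fin n}

theorem exists_mem_incProd_comp_predAbove (hu : u ∈ IncProd D) (hv : v ∈ IncProd D)
    (huv : ∀ j ≠ i, u j = v j) (hlt : u i < v i) :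
    ∃ z ∈ IncProd (D ∘ i.predAbove), z ∘ i.succ.succAbove = u ∧ z ∘ i.castSucc.succAbove = v := by
  refine ⟨i.succ.insertNth (v i) u, ⟨?_, fun k => ?_⟩, Fin.insertNth_comp_succAbove _ _ _, ?_⟩
  · refine (Fin.strictMono_insertNth_iff _ _ _).2 ⟨hu.1, fun j hj => ?_, fun j hj => ?_⟩
    · exact (hu.1.monotone (Fin.castSucc_lt_succ_iff.1 hj)).trans_lt hlt
    · have hij : i < j := Fin.succ_le_castSucc_iff.1 hj
      exact (huv j hij.ne').symm ▸ hv.1 hij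
  · induction k using i.succ.succAboveCases with
    | x => simpa using hv.2 i
    | p j => simpa [Fin.predAbove_succ_succAbove] using hu.2 j
  · funext j
    rcases eq_or_ne j i with rfl | h
    · simp
    · simp [← Fin.succAbove_succ_eq_succAbove_castSucc h, huv j h]

lemma update_mem_incProd {x y : Fin n → Ordinal} (hx : x ∈ IncProd D) (hy : y ∈ IncProd D)
    (hlt : x i < y i) (hgt : ∀ j, i < j → x j = y j) : Function.update x i (y i) ∈ IncProd D := by
  refine ⟨fun a b hab => ?_, fun j => ?_⟩
  · simp only [Function.update_apply]
    split_ifs with ha hb hb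
    · exact absurd (ha ▸ hb ▸ hab) (lt_irrefl _)
    · subst ha; exact hgt b hab ▸ hy.1 hab
    · subst hb; exact (hx.1 hab).trans hlt
    · exact hx.1 hab
  · rcases eq_or_ne j i with rfl | hj
    · simpa using hy.2 j
    · simpa [Function.update_of_ne hj] using hx.2 j

end Tuples

section ImportantCoords

variable {n : ℕ} {H : Fin n → Set Ordinal} {B : Type*} {F : (Fin n → Ordinal) → B}

def importantCoords (F : (Fin n → Ordinal) → B) (H : Fin n → Set Ordinal) : Set (Fin n) :=
  {i | ∃ u ∈ IncProd H, ∃ v ∈ IncProd H, (∀ j ≠ i, u j = v j) ∧ u i < v i ∧ F u ≠ F v}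

/-- A pattern `(p, q, g)` places two `n`-tuples `z ∘ p` and `z ∘ q` inside an increasing `m`-tuple
`z` whose `j`-th entry is drawn from `H (g j)`. -/
def IsPatternHomogeneous (F : (Fin n → Ordinal) → B) (H : Fin n → Set Ordinal) (m : ℕ) :
    Prop :=
  ∀ (p q : Fin n → Fin m) (g : Fin m → Fin n),
    IsHomogeneous (fun z => F (z ∘ p) = F (z ∘ q)) (H ∘ g)

theorem IsPatternHomogeneous.mono {m : ℕ} {H' : Fin n → Set Ordinal}
    (h : IsPatternHomogeneous F H m) (hle : H' ≤ H) : IsPatternHomogeneous F H' m :=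
  fun p q g => (h p q g).mono fun j => hle (g j)

theorem apply_ne_of_mem_importantCoords (hhom : IsPatternHomogeneous F H (n + 1)) {i : Fin n}
    (hi : i ∈ importantCoords F H) {u v : Fin n → Ordinal} (hu : u ∈ IncProd H)
    (hv : v ∈ IncProd H) (huv : ∀ j ≠ i, u j = v j) (hne : u i ≠ v i) : F u ≠ F v := by
  obtain ⟨a, ha, b, hb, hab, hlt, hFab⟩ := hi
  wlog h : u i < v i generalizing u v
  · exact fun hF => this hv hu (fun j hj => (huv j hj).symm) hne.symm
      (hne.lt_or_gt.resolve_left h) hF.symm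
  obtain ⟨z, hz, rfl, rfl⟩ := exists_mem_incProd_comp_predAbove hu hv huv h
  obtain ⟨w, hw, rfl, rfl⟩ := exists_mem_incProd_comp_predAbove ha hb hab hlt
  exact fun hF => hFab (hhom _ _ _ z hz w hw hF)

theorem exists_merge {x y : Fin n → Ordinal} (hx : x ∈ IncProd H) (hy : y ∈ IncProd H) :
    ∃ m ≤ 2 * n, ∃ (z : Fin m → Ordinal) (g : Fin m → Fin n) (p q : Fin n → Fin m),
      z ∈ IncProd (H ∘ g) ∧ z ∘ p = x ∧ z ∘ q = y ∧ ∀ a, g (q a) = a := by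
  classical
  set s := Finset.univ.image x ∪ Finset.univ.image y
  have hm : s.card ≤ 2 * n := (Finset.card_union_le _ _).trans <| by
    simpa [two_mul] using add_le_add (Finset.card_image_le (s := Finset.univ) (f := x))
      (Finset.card_image_le (s := Finset.univ) (f := y))
  set z := s.orderEmbOfFin rfl
  have hz (β : Ordinal) (hβ : β ∈ s) : ∃ j, z j = β := by
    rwa [← Finset.mem_coe, ← Finset.range_orderEmbOfFin s rfl] at hβ
  choose p hp using fun a => hz (x a) (by simp [s])
  choose q hq using fun a => hz (y a) (by simp [s])
  -- colour each entry of `z` by a coordinate it comes from, preferring `y` so that `g ∘ q = id`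
  have hg (j) : ∃ a, z j ∈ H a ∧ ∀ b, y b = z j → b = a := by
    by_cases h : ∃ b, y b = z j
    · obtain ⟨b, hb⟩ := h
      exact ⟨b, hb ▸ hy.2 b, fun b' hb' => hy.1.injective (hb'.trans hb.symm)⟩
    · have hzj : z j ∈ s := Finset.orderEmbOfFin_mem s rfl j
      simp only [s, Finset.mem_union, Finset.mem_image, Finset.mem_univ, true_and] at hzj
      obtain ⟨a, ha⟩ := hzj.resolve_right h
      exact ⟨a, ha ▸ hx.2 a, fun b hb => absurd ⟨b, hb⟩ h⟩
  choose g hgH hgy using hg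
  exact ⟨s.card, hm, z, g, p, q, ⟨z.strictMono, hgH⟩, funext hp, funext hq,
    fun a => (hgy _ a (hq a).symm).symm⟩

variable {κ : Fin n → Ordinal} {U : Fin n → Set (Set Ordinal)}

theorem apply_ne_of_mem_importantCoords_of_eq_of_lt (hU : ∀ i, IsNormalMeasure (κ i) (U i))
    (hH : ∀ i, H i ∈ U i) (hav : ∀ i j, κ j < κ i → H i ⊆ Ici (κ j))
    (hhom : ∀ m ≤ 2 * n, IsPatternHomogeneous F H m) {i : Fin n} (hi : i ∈ importantCoords F H)
    {x y : Fin n → Ordinal} (hx : x ∈ IncProd H) (hy : y ∈ IncProd H) (hne : x i ≠ y i)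
    (hgt : ∀ j, i < j → x j = y j) : F x ≠ F y := by
  wlog hlt : x i < y i generalizing x y
  · exact fun h => this hy hx hne.symm (fun j hj => (hgt j hj).symm)
      (hne.lt_or_gt.resolve_left hlt) h.symm
  intro hF
  obtain ⟨m, hm, z, g, p, q, hz, rfl, rfl, hgq⟩ := exists_merge hx hy
  have hq : StrictMono q := fun a b hab => hz.1.lt_iff_lt.1 (hy.1 hab)
  have hpq (a : Fin n) : p a ≠ q i := by
    intro h
    have hxy : z (p a) = z (q i) := congrArg z h
    rcases lt_trichotomy a i with ha | rfl | ha
    · exact ((hx.1 ha).trans hlt).ne hxy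
    · exact hlt.ne hxy
    · exact ((hy.1 ha).trans_eq (hgt a ha).symm).ne' hxy
  -- duplicate the entry `q i` of the merged tuple: the two resulting realisations agree on `p`
  -- and differ on `q` exactly at `i`
  have hκg := monotone_comp_of_mem_incProd (fun i => (hU i).sets_subset _ (hH i)) hav hz
  obtain ⟨t, ht⟩ := incProd_nonempty (fun j => hU _)
    (hκg.comp (Fin.predAbove_right_monotone (q i))) (D := (H ∘ g) ∘ (q i).predAbove)
    fun j => hH _
  set z₁ := t ∘ (q i).succ.succAbove
  set z₂ := t ∘ (q i).castSucc.succAbove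
  have hz₁ : z₁ ∈ IncProd (H ∘ g) :=
    comp_mem_incProd ht (Fin.strictMono_succAbove _) (Fin.predAbove_succ_succAbove _)
  have hz₂ : z₂ ∈ IncProd (H ∘ g) :=
    comp_mem_incProd ht (Fin.strictMono_succAbove _) (Fin.predAbove_succAbove _)
  have hz₁₂ {k : Fin m} (hk : k ≠ q i) : z₁ k = z₂ k :=
    congrArg t (Fin.succAbove_succ_eq_succAbove_castSucc hk)
  refine apply_ne_of_mem_importantCoords (hhom _ (by have := i.pos; omega)) hi
    (comp_mem_incProd hz₁ hq hgq) (comp_mem_incProd hz₂ hq hgq)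
    (fun a ha => hz₁₂ (hq.injective.ne ha)) ?_ ?_
  · simpa [z₁, z₂] using ht.1.injective.ne Fin.castSucc_lt_succ.ne
  · calc F (z₁ ∘ q) = F (z₁ ∘ p) := (hhom m hm p q g z hz z₁ hz₁ hF).symm
      _ = F (z₂ ∘ p) := congrArg F (funext fun a => hz₁₂ (hpq a))
      _ = F (z₂ ∘ q) := hhom m hm p q g z hz z₂ hz₂ hF

theorem apply_eq_apply_iff (hU : ∀ i, IsNormalMeasure (κ i) (U i)) (hH : ∀ i, H i ∈ U i)
    (hav : ∀ i j, κ j < κ i → H i ⊆ Ici (κ j)) (hhom : ∀ m ≤ 2 * n, IsPatternHomogeneous F H m)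
    {x y : Fin n → Ordinal} (hx : x ∈ IncProd H) (hy : y ∈ IncProd H) :
    F x = F y ↔ ∀ i ∈ importantCoords F H, x i = y i := by
  suffices ∀ k : ℕ, ∀ x ∈ IncProd H, ∀ y ∈ IncProd H, (∀ j : Fin n, k ≤ j → x j = y j) →
      (F x = F y ↔ ∀ i ∈ importantCoords F H, x i = y i) from
    this n x hx y hy fun j hj => absurd j.isLt (not_lt.2 hj)
  intro k
  induction k with
  | zero =>
    intro x _ y _ hxy
    obtain rfl : x = y := funext fun j => hxy j (Nat.zero_le _)
    simp
  | succ k ih =>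
    intro x hx y hy hxy
    by_cases hk : ∃ i : Fin n, (i : ℕ) = k ∧ x i ≠ y i
    swap
    · simp only [not_exists, not_and, not_not] at hk
      exact ih x hx y hy fun j hj => hj.lt_or_eq.elim (hxy j) fun h => hk j h.symm
    obtain ⟨i, rfl, hne⟩ := hk
    have hgt (j : Fin n) (hj : i < j) : x j = y j := hxy j hj
    by_cases hi : i ∈ importantCoords F H
    · exact iff_of_false
        (apply_ne_of_mem_importantCoords_of_eq_of_lt hU hH hav hhom hi hx hy hne hgt)
        fun h => hne (h i hi)
    wlog hlt : x i < y i generalizing x y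
    · exact eq_comm.trans <| (this y hy x hx hne.symm (fun j hj => (hxy j hj).symm)
        (fun j hj => (hgt j hj).symm) (hne.lt_or_gt.resolve_left hlt)).trans
        (forall₂_congr fun _ _ => eq_comm)
    set w := Function.update x i (y i)
    have hw : w ∈ IncProd H := update_mem_incProd hx hy hlt hgt
    have hxw : F x = F w := by
      by_contra h
      exact hi ⟨x, hx, w, hw, fun j hj => (Function.update_of_ne hj _ _).symm, by simpa [w], h⟩
    rw [hxw, ih w hw y hy fun j hj => ?_]
    · exact forall₂_congr fun j hj =>
        by rw [show w j = x j from Function.update_of_ne (ne_of_mem_of_not_mem hj hi) _ _]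
    · rcases eq_or_ne j i with rfl | h
      · simp [w]
      · rw [show w j = x j from Function.update_of_ne h _ _]
        exact hxy j (lt_of_le_of_ne hj (Fin.val_ne_of_ne h).symm)

end ImportantCoords

theorem exists_isPatternHomogeneous {n : ℕ} {κ : Fin n → Ordinal}
    {U : Fin n → Set (Set Ordinal)} (hU : ∀ i, IsNormalMeasure (κ i) (U i)) {B : Type*}
    (F : (Fin n → Ordinal) → B) (N : ℕ) :
    ∃ H, (∀ i, H i ∈ U i) ∧ ∀ m ≤ N, IsPatternHomogeneous F H m := by
  obtain ⟨H, hH, hhom⟩ := exists_forall_of_antitone hU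
    (P := fun (k : Σ m : Fin (N + 1), (Fin n → Fin m) × (Fin n → Fin m) × (Fin m → Fin n)) H =>
      IsHomogeneous (fun z => F (z ∘ k.2.1) = F (z ∘ k.2.2.1)) (H ∘ k.2.2.2))
    (fun _ _ _ hle h => h.mono fun j => hle _) fun _ => exists_isHomogeneous_comp hU _ _
  exact ⟨H, hH, fun m hm p q g => hhom ⟨⟨m, Nat.lt_succ_of_le hm⟩, p, q, g⟩⟩

theorem important_coordinates_general {n : ℕ}
    (κ : Fin n → Ordinal)
    (U : Fin n → Set (Set Ordinal)) (hU : ∀ i, IsNormalMeasure (κ i) (U i))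
    {B : Type*} (A : Fin n → Set Ordinal) (hA : ∀ i, A i ∈ U i)
    (F : (Fin n → Ordinal) → B) :
    ∃ (H : Fin n → Set Ordinal) (I : Set (Fin n)),
      (∀ i, H i ⊆ A i ∧ H i ∈ U i) ∧
      ∀ x ∈ IncProd H, ∀ y ∈ IncProd H, (F x = F y ↔ ∀ i ∈ I, x i = y i) := by
  obtain ⟨H₀, hH₀, hhom⟩ := exists_isPatternHomogeneous hU F (2 * n)
  obtain ⟨H₁, hH₁, hav⟩ := exists_forall_subset_Ici hU
  set H := fun i => H₀ i ∩ A i ∩ H₁ i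
  have hH (i) : H i ∈ U i :=
    (hU i).inter_mem _ ((hU i).inter_mem _ (hH₀ i) _ (hA i)) _ (hH₁ i)
  refine ⟨H, importantCoords F H, fun i => ⟨fun β hβ => hβ.1.2, hH i⟩, fun x hx y hy => ?_⟩
  exact apply_eq_apply_iff hU hH (fun i j hij => inter_subset_right.trans (hav i j hij))
    (fun m hm => (hhom m hm).mono fun _ => inter_subset_left.trans inter_subset_left) hx hy

/-- Lemma (important coordinates): for measurable cardinals `κ₁ ≤ ... ≤ κₙ`
with normal measures `U₁, ..., Uₙ`, sets `Aᵢ ∈ Uᵢ`, and any function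
`F : ∏ᵢ Aᵢ → B` into any set `B`, there are `Hᵢ ⊆ Aᵢ` with `Hᵢ ∈ Uᵢ` and a set
of indices `I ⊆ {1, ..., n}` such that for all increasing tuples
`x, y ∈ ∏ᵢ Hᵢ`, `F x = F y` iff `x` and `y` agree on `I`; equivalently, the
induced function `F_I` on restrictions to `I` is well defined and injective. -/
theorem important_coordinates {n : ℕ} (hn : 0 < n)
    (κ : Fin n → Ordinal) (hmono : Monotone κ)
    (hcardinal : ∀ i, ((κ i).card).ord = κ i)
    (hmeasurable : ∀ i, Cardinal.aleph0 < (κ i).card)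
    (U : Fin n → Set (Set Ordinal)) (hU : ∀ i, IsNormalMeasure (κ i) (U i))
    {B : Type*} (A : Fin n → Set Ordinal) (hA : ∀ i, A i ∈ U i)
    (F : (Fin n → Ordinal) → B) :
    ∃ (H : Fin n → Set Ordinal) (I : Set (Fin n)),
      (∀ i, H i ⊆ A i ∧ H i ∈ U i) ∧
      ∀ x ∈ IncProd H, ∀ y ∈ IncProd H, (F x = F y ↔ ∀ i ∈ I, x i = y i) :=
  important_coordinates_general κ U hU A hA F
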